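/- Let A be a nonzero commutative ring that is finitely generated as a ℤ-algebra and torsion-free as a ℤ-module. Then the set of prime integers p > 0 such that the image of p is a unit of A is finite. -/

import Mathlib

/-!
Since `A` is torsion-free, it is flat over `ℤ`, so `ℚ ⊗[ℤ] A` is a nonzero finitely
generated `ℚ`-algebra; by the Nullstellensatz its residue fields are finite over `ℚ`, which
gives a ring map `f : A → K` into a nonzero ring finite over `ℚ`. Clearing the denominators
of the images of finitely many generators of `A` yields `N ≠ 0` such that `f(A)` is integral
over `ℤ[1/N]`. If `p` is a unit of `A`, the rational number `1/p = f(p⁻¹)` is integral over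
`ℤ[1/N]`, hence lies in `ℤ[1/N]`, so `p ∣ N`.
-/

open TensorProduct

section

variable (R : Type*) {K : Type*} [CommRing R] [CommRing K] [Algebra R K]

/-- When `N` is invertible in `K`, this is the integral closure of `R[1/N]` in `K`. -/
def integralClosureAway (N : R) : Subalgebra R K where
  carrier := {x | ∃ k : ℕ, IsIntegral R (N ^ k • x)}
  mul_mem' := by
    rintro x y ⟨k, hx⟩ ⟨l, hy⟩
    refine ⟨k + l, ?_⟩
    rw [pow_add, ← smul_mul_smul_comm]
    exact hx.mul hy
  add_mem' := by
    rintro x y ⟨k, hx⟩ ⟨l, hy⟩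
    refine ⟨k + l, ?_⟩
    rw [smul_add, pow_add, mul_smul, mul_smul, smul_comm (N ^ k) (N ^ l) x]
    exact (hx.smul (N ^ l)).add (hy.smul (N ^ k))
  algebraMap_mem' r := ⟨0, by simpa using isIntegral_algebraMap⟩

variable {R}

theorem AlgHom.exists_range_le_integralClosureAway [IsDomain R] [Algebra.IsAlgebraic R K]
    {A : Type*} [CommRing A] [Algebra R A] [hA : Algebra.FiniteType R A] (f : A →ₐ[R] K) :
    ∃ N ≠ (0 : R), f.range ≤ integralClosureAway R N := by
  classical
  obtain ⟨s, hs⟩ := hA.out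
  choose d hd0 hd using fun a : A =>
    (Algebra.IsAlgebraic.isAlgebraic (R := R) (f a)).exists_integral_multiple
  refine ⟨∏ a ∈ s, d a, Finset.prod_ne_zero_iff.mpr fun a _ => hd0 a, ?_⟩
  rw [← Algebra.map_top, ← hs, AlgHom.map_adjoin]
  refine Algebra.adjoin_le ?_
  rintro _ ⟨a, ha, rfl⟩
  refine ⟨1, ?_⟩
  rw [pow_one, ← Finset.mul_prod_erase s d ha, mul_comm, mul_smul]
  exact (hd a).smul (∏ b ∈ s.erase a, d b)

end

theorem Rat.exists_intCast_eq_of_isIntegral {K : Type*} [CommRing K] [Nontrivial K] [Algebra ℚ K]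
    {q : ℚ} (hq : IsIntegral ℤ (algebraMap ℚ K q)) : ∃ m : ℤ, (m : ℚ) = q := by
  rw [isIntegral_algebraMap_iff (algebraMap ℚ K).injective] at hq
  simpa using IsIntegrallyClosed.isIntegral_iff.mp hq

theorem finite_primes_isUnit_of_ringHom {A K : Type*} [CommRing A] [Algebra.FiniteType ℤ A]
    [CommRing K] [Nontrivial K] [Algebra ℚ K] [Algebra.IsAlgebraic ℚ K] (f : A →+* K) :
    {p : ℕ | p.Prime ∧ IsUnit (p : A)}.Finite := by
  have : Algebra.IsAlgebraic ℤ K :=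
    (IsFractionRing.comap_isAlgebraic_iff (K := ℚ)).mpr inferInstance
  obtain ⟨N, hN, hf⟩ := f.toIntAlgHom.exists_range_le_integralClosureAway
  refine N.natAbs.primeFactors.finite_toSet.subset ?_
  rintro p ⟨hp, u, hu⟩
  obtain ⟨k, hk⟩ := hf ⟨(u⁻¹ : Aˣ), rfl⟩
  have hinv : f (u⁻¹ : Aˣ) = algebraMap ℚ K (p : ℚ)⁻¹ := by
    refine left_inv_eq_right_inv (a := (p : K)) ?_ ?_
    · rw [← map_natCast f, ← map_mul, ← hu, Units.inv_mul, map_one]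
    · rw [← map_natCast (algebraMap ℚ K), ← map_mul,
        mul_inv_cancel₀ (by exact_mod_cast hp.ne_zero), map_one]
  obtain ⟨m, hm⟩ : ∃ m : ℤ, (m : ℚ) = N ^ k / p := by
    refine Rat.exists_intCast_eq_of_isIntegral (K := K) ?_
    rwa [div_eq_mul_inv, map_mul, map_pow, map_intCast, ← Int.cast_pow, ← zsmul_eq_mul,
      ← hinv]
  have hdvd : (p : ℤ) ∣ N ^ k := by
    refine ⟨m, Int.cast_injective (α := ℚ) ?_⟩
    rw [Int.cast_mul, hm, Int.cast_natCast, mul_div_cancel₀ _ (by exact_mod_cast hp.ne_zero),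
      Int.cast_pow]
  have hpN : (p : ℤ) ∣ N := (Nat.prime_iff_prime_int.mp hp).dvd_of_dvd_pow hdvd
  exact Nat.mem_primeFactors.mpr ⟨hp, Int.natCast_dvd.mp hpN, Int.natAbs_ne_zero.mpr hN⟩

/-- Let `A` be a nonzero commutative ring that is finitely generated as a `ℤ`-algebra and
torsion-free as a `ℤ`-module (multiplication by every nonzero integer is injective on `A`).
Then the set of prime integers `p > 0` whose image in `A` is a unit is finite. -/
theorem finite_primes_isUnit (A : Type u) [CommRing A] [Nontrivial A]
    (hfg : Algebra.FiniteType ℤ A)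
    (htf : ∀ m : ℤ, m ≠ 0 → Function.Injective fun a : A => m • a) :
    {p : ℕ | p.Prime ∧ IsUnit ((p : ℕ) : A)}.Finite := by
  have : Module.IsTorsionFree ℤ A := ⟨fun m hm => htf m hm.ne_zero⟩
  have : Nontrivial (ℚ ⊗[ℤ] A) :=
    Algebra.TensorProduct.nontrivial_of_algebraMap_injective_of_flat_right ℤ ℚ A
      (algebraMap ℤ ℚ).injective_int
  obtain ⟨I, hI⟩ := Ideal.exists_maximal (ℚ ⊗[ℤ] A)
  have : Module.Finite ℚ ((ℚ ⊗[ℤ] A) ⧸ I) := by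
    let := Ideal.Quotient.field I
    exact finite_of_finite_type_of_isJacobsonRing ℚ _
  exact finite_primes_isUnit_of_ringHom (K := (ℚ ⊗[ℤ] A) ⧸ I)
    ((Ideal.Quotient.mk I).comp Algebra.TensorProduct.includeRight.toRingHom)
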